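/- arXiv:1304.6008 — 2 statements merged into one kernel-verified Lean document; each statement's English description precedes it below -/
import Mathlib

section
/- For every even integer d ≥ 2 and every natural number n, the sequence D_d(n) = (∏_{r=0}^{d-1} r!/(n+r)!) · (∏_{s=0}^{d/2-1} (2n+2s)!/(2s)!) satisfies the Pochhammer identity D_d(n) = 2^{dn} · (∏_{k=1}^{d/2} (k - 1/2)_n) / (∏_{k=d/2+1}^{d} (k)_n). (Equivalently, the ordinary generating function of D_d(n) is the generalized hypergeometric series _{d/2+1}F_{d/2} with upper parameters 1/2, 3/2, …, (d-1)/2, 1, lower parameters d/2+1, d/2+2, …, d, and argument 2^d z.) -/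
open Finset

/-- The generalized sequence `D_d(n)` for even `d`. -/
noncomputable def seqD (d n : ℕ) : ℝ :=
  (∏ r ∈ Finset.range d, (r.factorial : ℝ) / ((n + r).factorial : ℝ)) *
    (∏ s ∈ Finset.range (d / 2), ((2 * n + 2 * s).factorial : ℝ) / ((2 * s).factorial : ℝ))

/-- Ascending factorial (Pochhammer symbol) `(a)_n = a (a+1) ⋯ (a+n-1)`. -/
noncomputable def ascFactorial (a : ℝ) (n : ℕ) : ℝ :=
  ∏ i ∈ Finset.range n, (a + i)

/-!
Since `(n + r)! / r! = (r + 1)_n`, the first product in `D_{2m}(n)` is `1 / ∏_{r < 2m} (r + 1)_n`.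
By the duplication formula `(2a)_{2n} = 4^n (a)_n (a + 1/2)_n`, the factor `(2n + 2s)! / (2s)!`
equals `4^n (s + 1/2)_n (s + 1)_n`, so the second product cancels the factors `r < m` of the first,
leaving `4^{mn} ∏_{s < m} (s + 1/2)_n / ∏_{k < m} (m + 1 + k)_n`.
-/

open scoped Nat

lemma ascFactorial_succ (a : ℝ) (n : ℕ) : ascFactorial a (n + 1) = ascFactorial a n * (a + n) :=
  prod_range_succ _ _

lemma ascFactorial_pos {a : ℝ} (ha : 0 < a) (n : ℕ) : 0 < ascFactorial a n :=
  prod_pos fun _ _ => by positivity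

lemma natCast_ascFactorial (m k : ℕ) : (m.ascFactorial k : ℝ) = ascFactorial m k := by
  simp [Nat.ascFactorial_eq_prod_range, ascFactorial]

lemma factorial_mul_ascFactorial_add_one (r n : ℕ) :
    (r ! : ℝ) * ascFactorial (r + 1) n = (r + n)! := by
  rw [← Nat.factorial_mul_ascFactorial, Nat.cast_mul, natCast_ascFactorial, Nat.cast_add_one]

lemma factorial_div_factorial_add (r n : ℕ) :
    (r ! : ℝ) / (n + r)! = (ascFactorial (r + 1) n)⁻¹ := by
  rw [add_comm n, ← factorial_mul_ascFactorial_add_one, div_mul_cancel_left₀ (by positivity)]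

lemma ascFactorial_two_mul (a : ℝ) (n : ℕ) :
    ascFactorial (2 * a) (2 * n) = 4 ^ n * ascFactorial a n * ascFactorial (a + 1 / 2) n := by
  induction n with
  | zero => simp [ascFactorial]
  | succ n ih =>
    rw [mul_add_one, ascFactorial_succ, ascFactorial_succ, ih, ascFactorial_succ, ascFactorial_succ]
    push_cast
    ring

lemma factorial_two_mul_add_div (s n : ℕ) :
    ((2 * n + 2 * s)! : ℝ) / (2 * s)! =
      4 ^ n * ascFactorial (s + 1 / 2) n * ascFactorial (s + 1) n := by
  rw [add_comm (2 * n), ← factorial_mul_ascFactorial_add_one, mul_div_cancel_left₀ _ (by positivity)]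
  push_cast
  rw [show (2 : ℝ) * s + 1 = 2 * (s + 1 / 2) by ring, ascFactorial_two_mul]
  ring_nf

lemma prod_Icc_add_one_eq_prod_range {M : Type*} [CommMonoid M] (f : ℕ → M) (a m : ℕ) :
    ∏ k ∈ Icc (a + 1) (a + m), f k = ∏ k ∈ range m, f (a + 1 + k) := by
  rw [← Ico_add_one_right_eq_Icc, prod_Ico_eq_prod_range, show a + m + 1 - (a + 1) = m by omega]

lemma seqD_two_mul (m n : ℕ) :
    seqD (2 * m) n = 4 ^ (n * m) * (∏ k ∈ range m, ascFactorial (k + 1 / 2) n) /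
      ∏ k ∈ range m, ascFactorial (m + 1 + k) n := by
  have h_upper : ∏ r ∈ range (2 * m), (r ! : ℝ) / (n + r)! =
      ((∏ k ∈ range m, ascFactorial (k + 1) n) * ∏ k ∈ range m, ascFactorial (m + 1 + k) n)⁻¹ := by
    simp_rw [factorial_div_factorial_add, prod_inv_distrib, two_mul, prod_range_add, Nat.cast_add,
      add_right_comm]
  have h_central : ∏ s ∈ range m, ((2 * n + 2 * s)! : ℝ) / (2 * s)! =
      4 ^ (n * m) * (∏ k ∈ range m, ascFactorial (k + 1 / 2) n) *
        ∏ k ∈ range m, ascFactorial (k + 1) n := by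
    simp_rw [factorial_two_mul_add_div, prod_mul_distrib, prod_const, card_range, pow_mul]
  have h_pos : 0 < ∏ k ∈ range m, ascFactorial (k + 1) n :=
    prod_pos fun _ _ => ascFactorial_pos (by positivity) n
  rw [seqD, Nat.mul_div_cancel_left m two_pos, h_upper, h_central, mul_inv, mul_comm,
    mul_assoc, mul_inv_cancel_left₀ h_pos.ne', ← div_eq_mul_inv]

theorem seqD_pochhammer_general (d : ℕ) (hdeven : Even d) (n : ℕ) :
    seqD d n =
      (2 : ℝ) ^ (d * n) * (∏ k ∈ Finset.Icc 1 (d / 2), ascFactorial ((k : ℝ) - 1 / 2) n) /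
        (∏ k ∈ Finset.Icc (d / 2 + 1) d, ascFactorial (k : ℝ) n) := by
  obtain ⟨m, rfl⟩ := hdeven.two_dvd
  have h_pow : (2 : ℝ) ^ (2 * m * n) = 4 ^ (n * m) := by
    rw [mul_assoc, pow_mul, mul_comm n]; norm_num
  have h_lower : ∏ k ∈ Icc 1 m, ascFactorial ((k : ℝ) - 1 / 2) n =
      ∏ k ∈ range m, ascFactorial (k + 1 / 2) n := by
    have h := prod_Icc_add_one_eq_prod_range (fun k : ℕ => ascFactorial ((k : ℝ) - 1 / 2) n) 0 m
    rw [zero_add, zero_add] at h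
    rw [h]
    exact prod_congr rfl fun k _ => by push_cast; ring_nf
  rw [Nat.mul_div_cancel_left m two_pos, seqD_two_mul, h_pow, h_lower, two_mul,
    prod_Icc_add_one_eq_prod_range]
  simp only [Nat.cast_add, Nat.cast_one]

theorem seqD_pochhammer (d : ℕ) (hd : 2 ≤ d) (hdeven : Even d) (n : ℕ) :
    seqD d n =
      (2 : ℝ) ^ (d * n) * (∏ k ∈ Finset.Icc 1 (d / 2), ascFactorial ((k : ℝ) - 1 / 2) n) /
        (∏ k ∈ Finset.Icc (d / 2 + 1) d, ascFactorial (k : ℝ) n) :=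
  seqD_pochhammer_general d hdeven n
end

section
/- For every even integer d ≥ 4 there exists a function V_d : ℝ → ℝ that is continuous and strictly positive on the open interval (0, 2^d), integrable on [0, 2^d], and satisfies ∫_0^{2^d} x^n V_d(x) dx = D_d(n) for every natural number n; i.e., the Hausdorff moment problem for the sequence D_d(n) on the interval [0, 2^d] has a positive absolutely continuous solution. -/
/-!
`D_d(n + 1) / D_d(n) = ∏_{k=1}^{d} (2n + k)/(n + k)`, and `(2n + k)/(n + k)` is the ratio of
consecutive moments of `2 · Beta(k/2, k/2)`. So, up to normalisation, `D_d` is the moment sequence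
of a product of independent variables: `4 · Beta(1/2, 3/2)` (which accounts for `k = 1, 2`) times
`2 · Beta(k/2, k/2)` for `3 ≤ k ≤ d`. The density of such a product is an iterated multiplicative
convolution, under which moments multiply (Fubini). For `k ≥ 3` the Beta density is continuous on
all of `ℝ`, and convolving with it keeps the density continuous and positive on the interval, whose
length doubles at each step.
-/

open Finset MeasureTheory

open Set ProbabilityTheory

namespace ProbabilityTheory

variable {α β : ℝ}

lemma betaPDFReal_nonneg (hα : 0 < α) (hβ : 0 < β) (x : ℝ) : 0 ≤ betaPDFReal α β x := by
  by_cases hx : 0 < x ∧ x < 1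
  · exact (betaPDFReal_pos hx.1 hx.2 hα hβ).le
  · rw [betaPDFReal, if_neg hx]

lemma integral_betaPDFReal (hα : 0 < α) (hβ : 0 < β) : ∫ x, betaPDFReal α β x = 1 := by
  rw [integral_eq_lintegral_of_nonneg_ae (.of_forall (betaPDFReal_nonneg hα hβ))
    (measurable_betaPDFReal α β).aestronglyMeasurable]
  exact congrArg ENNReal.toReal (lintegral_betaPDF_eq_one hα hβ)

lemma integrable_betaPDFReal (hα : 0 < α) (hβ : 0 < β) : Integrable (betaPDFReal α β) :=
  .of_integral_ne_zero (by simp [integral_betaPDFReal hα hβ])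

lemma beta_add_one_left (hα : 0 < α) (hβ : 0 < β) :
    beta (α + 1) β = α / (α + β) * beta α β := by
  rw [beta, beta, add_right_comm, Real.Gamma_add_one hα.ne', Real.Gamma_add_one (by positivity)]
  have := Real.Gamma_pos_of_pos (add_pos hα hβ)
  field_simp

lemma pow_mul_betaPDFReal (hα : 0 < α) (hβ : 0 < β) (n : ℕ) (x : ℝ) :
    x ^ n * betaPDFReal α β x = beta (α + n) β / beta α β * betaPDFReal (α + n) β x := by
  unfold betaPDFReal
  split_ifs with hx
  · have := beta_pos (α := α + n) (by positivity) hβ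
    rw [show α + n - 1 = n + (α - 1) by ring, Real.rpow_add hx.1, Real.rpow_natCast]
    field_simp
  · simp

lemma integral_pow_mul_betaPDFReal (hα : 0 < α) (hβ : 0 < β) (n : ℕ) :
    ∫ x, x ^ n * betaPDFReal α β x = beta (α + n) β / beta α β := by
  simp_rw [pow_mul_betaPDFReal hα hβ, integral_const_mul,
    integral_betaPDFReal (α := α + n) (by positivity) hβ, mul_one]

lemma betaPDFReal_eq_max_rpow (hα : 1 < α) (hβ : 1 < β) (x : ℝ) :
    betaPDFReal α β x = 1 / beta α β * max x 0 ^ (α - 1) * max (1 - x) 0 ^ (β - 1) := by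
  unfold betaPDFReal
  split_ifs with hx
  · rw [max_eq_left hx.1.le, max_eq_left (by linarith [hx.2])]
  · rcases not_and_or.mp hx with h | h
    · rw [max_eq_right (not_lt.mp h), Real.zero_rpow (by linarith)]
      ring
    · rw [max_eq_right (show 1 - x ≤ 0 by linarith [not_lt.mp h]), Real.zero_rpow (by linarith)]
      ring

lemma continuous_betaPDFReal (hα : 1 < α) (hβ : 1 < β) : Continuous (betaPDFReal α β) := by
  rw [funext (betaPDFReal_eq_max_rpow hα hβ)]
  have h := Real.continuous_rpow_const (q := α - 1) (by linarith)
  have h' := Real.continuous_rpow_const (q := β - 1) (by linarith)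
  fun_prop

lemma continuousOn_betaPDFReal : ContinuousOn (betaPDFReal α β) (Ioo 0 1) := by
  have h : ContinuousOn (fun x : ℝ => 1 / beta α β * x ^ (α - 1) * (1 - x) ^ (β - 1)) (Ioo 0 1) :=
    ((continuousOn_const.mul (continuousOn_id.rpow_const fun x hx => Or.inl hx.1.ne')).mul
      ((continuousOn_const.sub continuousOn_id).rpow_const fun x hx =>
        Or.inl (sub_ne_zero.mpr hx.2.ne')))
  exact h.congr fun x hx => if_pos hx

end ProbabilityTheory

noncomputable def powerMoment (V : ℝ → ℝ) (n : ℕ) : ℝ := ∫ x, x ^ n * V x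

lemma integral_pow_mul_comp_div (g : ℝ → ℝ) (n : ℕ) {t : ℝ} (ht : 0 < t) :
    ∫ x, x ^ n * g (x / t) = t ^ (n + 1) * powerMoment g n := by
  have h : (fun x => x ^ n * g (x / t)) = fun x => (fun u => (t * u) ^ n * g u) (x / t) :=
    funext fun x => by simp only [mul_div_cancel₀ x ht.ne']
  rw [h, Measure.integral_comp_div (fun u => (t * u) ^ n * g u) t]
  simp_rw [mul_pow, mul_assoc, integral_const_mul, abs_of_pos ht, smul_eq_mul, powerMoment]
  ring

lemma integrable_pow_mul_comp_div {g : ℝ → ℝ} {n : ℕ} (hg : Integrable fun x => x ^ n * g x) {t : ℝ}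
    (ht : t ≠ 0) : Integrable fun x => x ^ n * g (x / t) := by
  refine ((hg.comp_div ht).const_mul (t ^ n)).congr (.of_forall fun x => ?_)
  simp only [div_pow]
  rw [← mul_assoc, mul_div_cancel₀ _ (pow_ne_zero n ht)]

structure IsPosDensityOn (M : ℝ) (V : ℝ → ℝ) : Prop where
  continuousOn : ContinuousOn V (Ioo 0 M)
  pos : ∀ x ∈ Ioo 0 M, 0 < V x
  eq_zero : ∀ x ∉ Ioo 0 M, V x = 0
  integrable : Integrable V

namespace IsPosDensityOn

variable {M : ℝ} {V : ℝ → ℝ}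

lemma nonneg (hV : IsPosDensityOn M V) (x : ℝ) : 0 ≤ V x := by
  by_cases hx : x ∈ Ioo 0 M
  · exact (hV.pos x hx).le
  · exact (hV.eq_zero x hx).ge

lemma integrable_pow_mul (hV : IsPosDensityOn M V) (n : ℕ) :
    Integrable (fun x => x ^ n * V x) := by
  refine (hV.integrable.norm.const_mul (M ^ n)).mono'
    ((continuous_pow n).aestronglyMeasurable.mul hV.integrable.aestronglyMeasurable)
    (.of_forall fun x => ?_)
  by_cases hx : x ∈ Ioo 0 M
  · rw [norm_mul, norm_pow, Real.norm_of_nonneg hx.1.le]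
    exact mul_le_mul_of_nonneg_right (pow_le_pow_left₀ hx.1.le hx.2.le n) (norm_nonneg _)
  · simp [hV.eq_zero x hx]

lemma powerMoment_zero_pos (hV : IsPosDensityOn M V) (hM : 0 < M) : 0 < powerMoment V 0 := by
  simp only [powerMoment, pow_zero, one_mul]
  rw [integral_pos_iff_support_of_nonneg hV.nonneg hV.integrable]
  refine lt_of_lt_of_le ?_ (measure_mono fun x hx => (hV.pos x hx).ne')
  simpa [Real.volume_Ioo] using hM

lemma intervalIntegral_pow_mul_eq_powerMoment (hV : IsPosDensityOn M V) (hM : 0 ≤ M) (n : ℕ) :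
    ∫ x in 0..M, x ^ n * V x = powerMoment V n := by
  rw [intervalIntegral.integral_of_le hM, integral_Ioc_eq_integral_Ioo,
    setIntegral_eq_integral_of_forall_compl_eq_zero fun x hx => by rw [hV.eq_zero x hx, mul_zero]]
  rfl

lemma exists_forall_le (hV : IsPosDensityOn M V) (hVc : Continuous V) : ∃ B, ∀ x, V x ≤ B := by
  have hsupp : HasCompactSupport V := HasCompactSupport.intro isCompact_Icc fun x hx =>
    hV.eq_zero x fun h => hx (Ioo_subset_Icc_self h)
  obtain ⟨B, hB⟩ := hVc.bounded_above_of_compact_support hsupp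
  exact ⟨B, fun x => (Real.le_norm_self _).trans (hB x)⟩

end IsPosDensityOn

section ScaledBeta

variable {L α β : ℝ}

lemma isPosDensityOn_betaPDFReal_div (hL : 0 < L) (hα : 0 < α) (hβ : 0 < β) :
    IsPosDensityOn L (fun x => betaPDFReal α β (x / L)) where
  continuousOn := continuousOn_betaPDFReal.comp (continuousOn_id.div_const L) fun x hx =>
    ⟨div_pos hx.1 hL, (div_lt_one hL).mpr hx.2⟩
  pos x hx := betaPDFReal_pos (div_pos hx.1 hL) ((div_lt_one hL).mpr hx.2) hα hβ
  eq_zero x hx := by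
    refine if_neg fun h => hx ⟨?_, ?_⟩
    · exact (div_pos_iff_of_pos_right hL).mp h.1
    · exact (div_lt_one hL).mp h.2
  integrable := (integrable_betaPDFReal hα hβ).comp_div hL.ne'

lemma powerMoment_succ_betaPDFReal_div (hL : 0 < L) (hα : 0 < α) (hβ : 0 < β) (n : ℕ) :
    powerMoment (fun x => betaPDFReal α β (x / L)) (n + 1) =
      L * (α + n) / (α + β + n) * powerMoment (fun x => betaPDFReal α β (x / L)) n := by
  have hmom (k : ℕ) : powerMoment (fun x => betaPDFReal α β (x / L)) k =
      L ^ (k + 1) * (beta (α + k) β / beta α β) := by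
    rw [powerMoment, integral_pow_mul_comp_div _ k hL, powerMoment,
      integral_pow_mul_betaPDFReal hα hβ]
  rw [hmom, hmom, Nat.cast_succ, ← add_assoc, beta_add_one_left (by positivity) hβ]
  have : 0 < α + β + n := by positivity
  field_simp
  ring

end ScaledBeta

/-- The density of `Y * X` for independent `Y ∼ g` and `X ∼ V` supported on positive reals. -/
noncomputable def mulConv (g V : ℝ → ℝ) (x : ℝ) : ℝ := ∫ t in Ioi 0, V t * g (x / t) / t

section MulConv

variable {c M : ℝ} {g V : ℝ → ℝ}

lemma mem_Ioo_mul_of_div_mem {x t : ℝ} (ht : t ∈ Ioo 0 M) (hxt : x / t ∈ Ioo 0 c) :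
    x ∈ Ioo 0 (c * M) := by
  obtain ⟨ht0, htM⟩ := ht
  rw [Set.mem_Ioo, div_pos_iff_of_pos_right ht0, div_lt_iff₀ ht0] at hxt
  exact ⟨hxt.1, hxt.2.trans_le (by nlinarith)⟩

lemma mulConv_integrand_nonneg (hV : IsPosDensityOn M V) (hg : IsPosDensityOn c g) (x t : ℝ) :
    0 ≤ V t * g (x / t) / t := by
  rcases le_or_gt t 0 with ht | ht
  · rw [hV.eq_zero t fun h => ht.not_gt h.1, zero_mul, zero_div]
  · exact div_nonneg (mul_nonneg (hV.nonneg t) (hg.nonneg _)) ht.le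

lemma mulConv_integrand_eq_zero (hV : IsPosDensityOn M V) (hg : IsPosDensityOn c g) {x : ℝ}
    (hx : x ∉ Ioo 0 (c * M)) (t : ℝ) : V t * g (x / t) / t = 0 := by
  by_cases ht : t ∈ Ioo 0 M
  · rw [hg.eq_zero _ fun hxt => hx (mem_Ioo_mul_of_div_mem ht hxt), mul_zero, zero_div]
  · rw [hV.eq_zero t ht, zero_mul, zero_div]

lemma norm_mulConv_integrand_le (hV : IsPosDensityOn M V) (hg : IsPosDensityOn c g) {B : ℝ}
    (hB : ∀ u, g u ≤ B) (hc : 0 ≤ c) {x₁ x : ℝ} (hx₁ : 0 < x₁) (hx : x₁ ≤ x) (t : ℝ) :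
    ‖V t * g (x / t) / t‖ ≤ B * c / x₁ * V t := by
  rw [Real.norm_of_nonneg (mulConv_integrand_nonneg hV hg x t)]
  have hB0 : 0 ≤ B := (hg.nonneg 0).trans (hB 0)
  by_cases hxt : x / t ∈ Ioo 0 c
  · have ht : 0 < t := by
      by_contra h
      exact hxt.1.not_ge (div_nonpos_of_nonneg_of_nonpos (hx₁.le.trans hx) (not_lt.mp h))
    have htc : x₁ < c * t := by
      have := (div_lt_iff₀ ht).mp hxt.2
      linarith
    rw [div_le_iff₀ ht]
    calc V t * g (x / t) ≤ V t * B := mul_le_mul_of_nonneg_left (hB _) (hV.nonneg t)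
      _ ≤ B * c / x₁ * V t * t := by
        rw [div_mul_eq_mul_div, div_mul_eq_mul_div, le_div_iff₀ hx₁]
        nlinarith [mul_nonneg hB0 (hV.nonneg t)]
  · rw [hg.eq_zero _ hxt, mul_zero, zero_div]
    exact mul_nonneg (div_nonneg (mul_nonneg hB0 hc) hx₁.le) (hV.nonneg t)

lemma aestronglyMeasurable_mulConv_integrand (hV : Integrable V) (hgm : Measurable g) (x : ℝ) :
    AEStronglyMeasurable (fun t => V t * g (x / t) / t) := by
  simp_rw [mul_div_assoc]
  exact hV.aestronglyMeasurable.mul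
    (by fun_prop : Measurable fun t => g (x / t) / t).aestronglyMeasurable

lemma integrableOn_mulConv_integrand (hV : IsPosDensityOn M V) (hg : IsPosDensityOn c g)
    (hgc : Continuous g) (hc : 0 ≤ c) {x : ℝ} (hx : 0 < x) :
    IntegrableOn (fun t => V t * g (x / t) / t) (Ioi 0) := by
  obtain ⟨B, hB⟩ := hg.exists_forall_le hgc
  exact ((hV.integrable.const_mul (B * c / x)).mono'
    (aestronglyMeasurable_mulConv_integrand hV.integrable hgc.measurable x)
    (.of_forall (norm_mulConv_integrand_le hV hg hB hc hx le_rfl))).integrableOn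

lemma mulConv_pos (hV : IsPosDensityOn M V) (hg : IsPosDensityOn c g) (hgc : Continuous g)
    (hc : 0 < c) {x : ℝ} (hx : x ∈ Ioo 0 (c * M)) : 0 < mulConv g V x := by
  have hxc : x / c < M := (div_lt_iff₀' hc).mpr hx.2
  rw [mulConv, setIntegral_pos_iff_support_of_nonneg_ae
    (.of_forall (mulConv_integrand_nonneg hV hg x))
    (integrableOn_mulConv_integrand hV hg hgc hc.le hx.1)]
  refine lt_of_lt_of_le ?_ (measure_mono (s := Ioo (x / c) M) fun t ht => ?_)
  · simpa [Real.volume_Ioo] using hxc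
  · have ht0 : 0 < t := (div_pos hx.1 hc).trans ht.1
    have hxt : x / t ∈ Ioo 0 c :=
      ⟨div_pos hx.1 ht0, (div_lt_iff₀ ht0).mpr ((div_lt_iff₀' hc).mp ht.1)⟩
    exact ⟨(div_pos (mul_pos (hV.pos t ⟨ht0, ht.2⟩) (hg.pos _ hxt)) ht0).ne', ht0⟩

lemma continuousAt_mulConv (hV : IsPosDensityOn M V) (hg : IsPosDensityOn c g)
    (hgc : Continuous g) (hc : 0 ≤ c) {x₀ : ℝ} (hx₀ : 0 < x₀) : ContinuousAt (mulConv g V) x₀ := by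
  obtain ⟨B, hB⟩ := hg.exists_forall_le hgc
  have hx₁ : 0 < x₀ / 2 := half_pos hx₀
  refine continuousAt_of_dominated (bound := fun t => B * c / (x₀ / 2) * V t)
    (.of_forall fun x =>
      (aestronglyMeasurable_mulConv_integrand hV.integrable hgc.measurable x).restrict)
    ?_ (hV.integrable.const_mul _).integrableOn (.of_forall fun t => by fun_prop)
  filter_upwards [Ioi_mem_nhds (half_lt_self hx₀)] with x hx
  exact .of_forall (norm_mulConv_integrand_le hV hg hB hc hx₁ (le_of_lt hx))

lemma integral_pow_mul_mulConv_integrand (n : ℕ) {t : ℝ} (ht : 0 < t) :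
    ∫ x, x ^ n * (V t * g (x / t) / t) = powerMoment g n * (t ^ n * V t) := by
  have h : ∀ x, x ^ n * (V t * g (x / t) / t) = V t / t * (x ^ n * g (x / t)) := fun x => by ring
  simp_rw [h, integral_const_mul, integral_pow_mul_comp_div g n ht]
  field_simp
  ring

lemma pow_mul_mulConv_integrand_nonneg (hV : IsPosDensityOn M V) (hg : IsPosDensityOn c g)
    (n : ℕ) (x : ℝ) {t : ℝ} (ht : 0 < t) : 0 ≤ x ^ n * (V t * g (x / t) / t) := by
  rcases lt_or_ge x 0 with hx | hx
  · rw [hg.eq_zero _ fun h => (div_neg_of_neg_of_pos hx ht).not_gt h.1, mul_zero, zero_div,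
      mul_zero]
  · exact mul_nonneg (pow_nonneg hx n) (mulConv_integrand_nonneg hV hg x t)

lemma integrable_prod_mulConv_integrand (hV : IsPosDensityOn M V) (hg : IsPosDensityOn c g)
    (hgm : Measurable g) (n : ℕ) :
    Integrable (Function.uncurry fun x t => x ^ n * (V t * g (x / t) / t))
      (volume.prod (volume.restrict (Ioi 0))) := by
  have hmeas : AEStronglyMeasurable (Function.uncurry fun x t => x ^ n * (V t * g (x / t) / t))
      (volume.prod (volume.restrict (Ioi 0))) := by
    simp_rw [Function.uncurry_def, mul_div_assoc]
    exact (by fun_prop : Measurable fun p : ℝ × ℝ => p.1 ^ n).aestronglyMeasurable.mul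
      ((hV.integrable.aestronglyMeasurable.restrict.comp_snd).mul
        (by fun_prop : Measurable fun p : ℝ × ℝ => g (p.1 / p.2) / p.2).aestronglyMeasurable)
  refine (integrable_prod_iff' hmeas).mpr ⟨?_, ?_⟩
  · filter_upwards [ae_restrict_mem measurableSet_Ioi] with t ht
    refine ((integrable_pow_mul_comp_div (hg.integrable_pow_mul n) ht.ne').const_mul
      (V t / t)).congr (.of_forall fun x => ?_)
    simp only [Function.uncurry_apply_pair]
    ring
  · refine ((hV.integrable_pow_mul n).integrableOn.const_mul (powerMoment g n)).congr ?_
    filter_upwards [ae_restrict_mem measurableSet_Ioi] with t ht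
    simp only [Function.uncurry_apply_pair]
    rw [← integral_pow_mul_mulConv_integrand n ht]
    exact integral_congr_ae (.of_forall fun x =>
      (Real.norm_of_nonneg (pow_mul_mulConv_integrand_nonneg hV hg n x ht)).symm)

lemma integrable_mulConv (hV : IsPosDensityOn M V) (hg : IsPosDensityOn c g)
    (hgm : Measurable g) : Integrable (mulConv g V) := by
  have h := (integrable_prod_mulConv_integrand hV hg hgm 0).integral_prod_left
  simp only [Function.uncurry_apply_pair, pow_zero, one_mul] at h
  exact h

lemma powerMoment_mulConv (hV : IsPosDensityOn M V) (hg : IsPosDensityOn c g)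
    (hgm : Measurable g) (n : ℕ) :
    powerMoment (mulConv g V) n = powerMoment g n * powerMoment V n := by
  calc powerMoment (mulConv g V) n
      = ∫ x, ∫ t in Ioi 0, x ^ n * (V t * g (x / t) / t) := by
        simp_rw [powerMoment, mulConv, ← integral_const_mul]
    _ = ∫ t in Ioi 0, ∫ x, x ^ n * (V t * g (x / t) / t) :=
        integral_integral_swap (integrable_prod_mulConv_integrand hV hg hgm n)
    _ = ∫ t in Ioi 0, powerMoment g n * (t ^ n * V t) :=
        setIntegral_congr_fun measurableSet_Ioi fun t ht => integral_pow_mul_mulConv_integrand n ht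
    _ = powerMoment g n * powerMoment V n := by
        rw [integral_const_mul, setIntegral_eq_integral_of_forall_compl_eq_zero fun t ht => by
          rw [hV.eq_zero t fun h => ht h.1, mul_zero]]
        rfl

lemma isPosDensityOn_mulConv (hV : IsPosDensityOn M V)
    (hg : IsPosDensityOn c g) (hgc : Continuous g) (hc : 0 < c) :
    IsPosDensityOn (c * M) (mulConv g V) where
  continuousOn x hx := (continuousAt_mulConv hV hg hgc hc.le hx.1).continuousWithinAt
  pos x hx := mulConv_pos hV hg hgc hc hx
  eq_zero x hx := by simp only [mulConv, mulConv_integrand_eq_zero hV hg hx, integral_zero]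
  integrable := integrable_mulConv hV hg hgc.measurable

end MulConv

noncomputable def momentRatio (K n : ℕ) : ℝ := ∏ k ∈ range K, (2 * n + k + 1 : ℝ) / (n + k + 1)

lemma prod_range_two_mul {M : Type*} [CommMonoid M] (f : ℕ → M) (m : ℕ) :
    ∏ k ∈ range (2 * m), f k = ∏ s ∈ range m, (f (2 * s) * f (2 * s + 1)) := by
  induction m with
  | zero => simp
  | succ m ih => rw [mul_add_one, prod_range_succ, prod_range_succ, ih, prod_range_succ, mul_assoc]

lemma seqD_zero (d : ℕ) : seqD d 0 = 1 := by
  simp only [seqD, zero_add, mul_zero]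
  rw [prod_eq_one fun r _ => div_self (by positivity),
    prod_eq_one fun s _ => div_self (by positivity), one_mul]

lemma momentRatio_two_mul (m n : ℕ) :
    momentRatio (2 * m) n = (∏ s ∈ range m, (2 * n + 2 * s + 1 : ℝ) * (2 * n + 2 * s + 2)) /
      ∏ k ∈ range (2 * m), (n + k + 1 : ℝ) := by
  rw [momentRatio, prod_div_distrib, prod_range_two_mul (fun k : ℕ => (2 * n + k + 1 : ℝ))]
  push_cast
  ring_nf

lemma seqD_succ {d : ℕ} (hd : Even d) (n : ℕ) :
    seqD d (n + 1) = momentRatio d n * seqD d n := by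
  obtain ⟨m, rfl⟩ := hd
  have h1 (r : ℕ) : ((r.factorial : ℝ) / ((n + 1 + r).factorial : ℝ)) =
      r.factorial / (n + r).factorial * (n + r + 1 : ℝ)⁻¹ := by
    rw [add_right_comm, Nat.factorial_succ]
    push_cast
    field_simp
  have h2 (s : ℕ) : ((2 * (n + 1) + 2 * s).factorial : ℝ) / ((2 * s).factorial : ℝ) =
      (2 * n + 2 * s).factorial / (2 * s).factorial *
        ((2 * n + 2 * s + 1 : ℝ) * (2 * n + 2 * s + 2)) := by
    rw [show 2 * (n + 1) + 2 * s = 2 * n + 2 * s + 1 + 1 by ring, Nat.factorial_succ,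
      Nat.factorial_succ]
    push_cast
    field_simp
    ring
  rw [← two_mul, seqD, seqD, Nat.mul_div_cancel_left m two_pos, momentRatio_two_mul,
    prod_congr rfl fun r _ => h1 r, prod_mul_distrib, prod_congr rfl fun s _ => h2 s,
    prod_mul_distrib, prod_inv_distrib]
  ring

lemma exists_isPosDensityOn_powerMoment_succ {K : ℕ} (hK : 2 ≤ K) :
    ∃ V, IsPosDensityOn (2 ^ K) V ∧
      ∀ n, powerMoment V (n + 1) = momentRatio K n * powerMoment V n := by
  induction K, hK using Nat.le_induction with
  | base =>
    refine ⟨fun x => betaPDFReal (1 / 2) (3 / 2) (x / 2 ^ 2),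
      isPosDensityOn_betaPDFReal_div (by norm_num) (by norm_num) (by norm_num), fun n => ?_⟩
    rw [powerMoment_succ_betaPDFReal_div (by norm_num) (by norm_num) (by norm_num), momentRatio,
      prod_range_succ, prod_range_one]
    have : (0 : ℝ) < n + 1 := by positivity
    field_simp
    push_cast
    ring
  | succ K hK ih =>
    obtain ⟨V, hV, hVmom⟩ := ih
    have hα : (1 : ℝ) < (K + 1) / 2 := by
      rw [lt_div_iff₀ two_pos]
      exact_mod_cast (by omega : 1 * 2 < K + 1)
    let g := fun x => betaPDFReal ((K + 1) / 2) ((K + 1) / 2) (x / 2)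
    have hg : IsPosDensityOn 2 g :=
      isPosDensityOn_betaPDFReal_div two_pos (by linarith) (by linarith)
    have hgc : Continuous g := (continuous_betaPDFReal hα hα).comp (continuous_id.div_const 2)
    refine ⟨mulConv g V, pow_succ' (2 : ℝ) K ▸ isPosDensityOn_mulConv hV hg hgc two_pos,
      fun n => ?_⟩
    rw [powerMoment_mulConv hV hg hgc.measurable, powerMoment_mulConv hV hg hgc.measurable, hVmom,
      powerMoment_succ_betaPDFReal_div two_pos (by linarith) (by linarith), momentRatio,
      momentRatio, prod_range_succ]
    have : (0 : ℝ) < n + K + 1 := by positivity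
    field_simp
    ring

/-- The Hausdorff moment problem for `D_d(n)` on `[0, 2^d]` has a positive, absolutely
continuous solution. -/
theorem seqD_hausdorff_solution (d : ℕ) (hd : 4 ≤ d) (hdeven : Even d) :
    ∃ V : ℝ → ℝ,
      ContinuousOn V (Set.Ioo (0 : ℝ) ((2 : ℝ) ^ (d : ℕ))) ∧
      (∀ x ∈ Set.Ioo (0 : ℝ) ((2 : ℝ) ^ (d : ℕ)), 0 < V x) ∧
      IntegrableOn V (Set.Icc (0 : ℝ) ((2 : ℝ) ^ (d : ℕ))) ∧
      (∀ n : ℕ, ∫ x in (0 : ℝ)..((2 : ℝ) ^ (d : ℕ)), x ^ n * V x = seqD d n) := by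
  obtain ⟨V, hV, hVmom⟩ := exists_isPosDensityOn_powerMoment_succ (by omega : 2 ≤ d)
  have hM : (0 : ℝ) < 2 ^ d := by positivity
  have hV0 := hV.powerMoment_zero_pos hM
  have hmom (n : ℕ) : powerMoment V n = seqD d n * powerMoment V 0 := by
    induction n with
    | zero => rw [seqD_zero, one_mul]
    | succ n ih => rw [hVmom, ih, seqD_succ hdeven, mul_assoc]
  refine ⟨fun x => V x / powerMoment V 0, hV.continuousOn.div_const _,
    fun x hx => div_pos (hV.pos x hx) hV0, (hV.integrable.div_const _).integrableOn, fun n => ?_⟩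
  simp_rw [mul_div_assoc', intervalIntegral.integral_div,
    hV.intervalIntegral_pow_mul_eq_powerMoment hM.le, hmom n]
  exact mul_div_cancel_right₀ _ hV0.ne'
end
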